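/- Let K^H(t,s) = c_H s^{1/2-H} ∫_s^t (u-s)^{H-3/2} u^{H-1/2} du for 0 < s < t, with H > 1/2 and c_H = (H(2H-1)/β(2-2H, H-1/2))^{1/2}. Then ∂K^H/∂t (t,s) = c_H (s/t)^{1/2-H} (t-s)^{H-3/2}, and for all a, b > 0 with a ≠ b: ∫_0^{a∧b} ∂₁K^H(a,u) ∂₁K^H(b,u) du = H(2H-1) |a-b|^{2H-2}. -/

import Mathlib

/-!
The first claim is the fundamental theorem of calculus for the integral defining `K^H`.
For the second, take `s < t` and put `a = 2 - 2H`, `b = H - 1/2`. Then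
`∂₁K^H(s,u) ∂₁K^H(t,u) = c_H² (st)^{H-1/2} u^{a-1} (s-u)^{b-1} (t-u)^{-(a+b)}`, and the Möbius
substitution `u = stw / (t - s + sw)`, a bijection of `[0,1]` onto `[0,s]`, turns this Euler-type
integral into `β(a,b) s^{a+b-1} t^{-b} (t-s)^{-a}`. Since `a + 2b = 1` and `c_H² β(a,b) = H(2H-1)`,
everything but `(t-s)^{2H-2}` cancels.
-/

open MeasureTheory intervalIntegral Set

/-- The real Beta function `β(x,y) = Γ(x)Γ(y)/Γ(x+y)`. -/
noncomputable def betaR (x y : ℝ) : ℝ := Real.Gamma x * Real.Gamma y / Real.Gamma (x + y)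

/-- The constant `c_H = (H(2H-1)/β(2-2H, H-1/2))^{1/2}`. -/
noncomputable def cH (H : ℝ) : ℝ := Real.sqrt (H * (2 * H - 1) / betaR (2 - 2 * H) (H - 1 / 2))

/-- The Volterra kernel `K^H(t,s) = c_H s^{1/2-H} ∫_s^t (u-s)^{H-3/2} u^{H-1/2} du`. -/
noncomputable def KH (H t s : ℝ) : ℝ :=
  cH H * s ^ ((1:ℝ) / 2 - H) * ∫ u in s..t, (u - s) ^ (H - 3 / 2) * u ^ (H - 1 / 2)

/-- The partial derivative `∂₁K^H(t,s) = c_H (s/t)^{1/2-H} (t-s)^{H-3/2}`. -/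
noncomputable def dKH (H t s : ℝ) : ℝ := cH H * (s / t) ^ ((1:ℝ) / 2 - H) * (t - s) ^ (H - 3 / 2)

theorem betaR_eq_integral {a b : ℝ} (ha : 0 < a) (hb : 0 < b) :
    betaR a b = ∫ x in (0:ℝ)..1, x ^ (a - 1) * (1 - x) ^ (b - 1) := by
  have hcoe : Complex.betaIntegral a b =
      ↑(∫ x in (0:ℝ)..1, x ^ (a - 1) * (1 - x) ^ (b - 1)) := by
    rw [← intervalIntegral.integral_ofReal, Complex.betaIntegral]
    refine integral_congr fun x hx => ?_
    rw [uIcc_of_le zero_le_one] at hx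
    push_cast
    rw [Complex.ofReal_cpow hx.1, Complex.ofReal_cpow (sub_nonneg.2 hx.2)]
    push_cast
    ring_nf
  rw [show betaR a b = ProbabilityTheory.beta a b from rfl,
    ProbabilityTheory.beta_eq_betaIntegralReal a b ha hb, hcoe, Complex.ofReal_re]

noncomputable def eulerSubst (s t w : ℝ) : ℝ := s * t * w / (t - s + s * w)

section EulerSubst

variable {s t : ℝ}

theorem eulerSubst_denom_pos (hs : 0 < s) (hst : s < t) {w : ℝ} (hw : 0 ≤ w) :
    0 < t - s + s * w := by
  nlinarith

theorem hasDerivAt_eulerSubst (hs : 0 < s) (hst : s < t) {w : ℝ} (hw : 0 ≤ w) :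
    HasDerivAt (eulerSubst s t) (s * t * (t - s) / (t - s + s * w) ^ 2) w := by
  have hD := eulerSubst_denom_pos hs hst hw
  have := ((hasDerivAt_id' w).const_mul (s * t)).div
    (((hasDerivAt_id' w).const_mul s).const_add (t - s)) hD.ne'
  exact this.congr_deriv (by ring)

theorem eulerSubst_injOn (hs : 0 < s) (hst : s < t) : InjOn (eulerSubst s t) (Ici 0) := by
  intro v hv w hw h
  have hv' := eulerSubst_denom_pos hs hst hv
  have hw' := eulerSubst_denom_pos hs hst hw
  rw [eulerSubst, eulerSubst, div_eq_div_iff hv'.ne' hw'.ne'] at h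
  have hne : s * t * (t - s) ≠ 0 := by have : 0 < t := hs.trans hst; positivity
  have : s * t * (t - s) * (v - w) = 0 := by linear_combination h
  simpa [hne, sub_eq_zero] using this

theorem eulerSubst_image_Icc (hs : 0 < s) (hst : s < t) :
    eulerSubst s t '' Icc 0 1 = Icc 0 s := by
  refine Subset.antisymm ?_ ?_
  · rintro _ ⟨w, ⟨hw0, hw1⟩, rfl⟩
    have hD := eulerSubst_denom_pos hs hst hw0
    constructor
    · exact div_nonneg (by have : 0 < t := hs.trans hst; positivity) hD.le
    · rw [eulerSubst, div_le_iff₀ hD]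
      nlinarith [mul_nonneg (mul_nonneg hs.le (sub_nonneg.2 hst.le)) (sub_nonneg.2 hw1)]
  · have h0 : eulerSubst s t 0 = 0 := by simp [eulerSubst]
    have h1 : eulerSubst s t 1 = s := by
      have : 0 < t := hs.trans hst
      rw [eulerSubst, mul_one, mul_one, sub_add_cancel, mul_div_cancel_right₀ s this.ne']
    simpa [h0, h1] using intermediate_value_Icc zero_le_one fun w hw =>
      (hasDerivAt_eulerSubst hs hst hw.1).continuousAt.continuousWithinAt

theorem eulerSubst_jacobian (hs : 0 < s) (hst : s < t) (a b : ℝ) {w : ℝ}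
    (hw : w ∈ Icc (0:ℝ) 1) :
    |s * t * (t - s) / (t - s + s * w) ^ 2| * (eulerSubst s t w ^ (a - 1) *
        (s - eulerSubst s t w) ^ (b - 1) * (t - eulerSubst s t w) ^ (-(a + b))) =
      s ^ (a + b - 1) * t ^ (-b) * (t - s) ^ (-a) * (w ^ (a - 1) * (1 - w) ^ (b - 1)) := by
  have ht : 0 < t := hs.trans hst
  have hts : 0 < t - s := sub_pos.2 hst
  have hD := eulerSubst_denom_pos hs hst hw.1
  have e1 : eulerSubst s t w = s * t / (t - s + s * w) * w := by rw [eulerSubst]; ring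
  have e2 : s - eulerSubst s t w = s * (t - s) / (t - s + s * w) * (1 - w) := by
    rw [eulerSubst]; field_simp; ring
  have e3 : t - eulerSubst s t w = t * (t - s) / (t - s + s * w) := by
    rw [eulerSubst]; field_simp; ring
  generalize t - s + s * w = D at hD e1 e2 e3 ⊢
  have hcoef : s * t * (t - s) / D ^ 2 * (s * t / D) ^ (a - 1) * (s * (t - s) / D) ^ (b - 1) *
      (t * (t - s) / D) ^ (-(a + b)) = s ^ (a + b - 1) * t ^ (-b) * (t - s) ^ (-a) := by
    refine Real.log_injOn_pos (by simp only [mem_Ioi]; positivity)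
      (by simp only [mem_Ioi]; positivity) ?_
    simp (disch := positivity) only [Real.log_mul, Real.log_div, Real.log_rpow, Real.log_pow]
    ring
  rw [e2, e3, e1, abs_of_pos (by positivity), Real.mul_rpow (by positivity) hw.1,
    Real.mul_rpow (by positivity) (sub_nonneg.2 hw.2), ← hcoef]
  ring

end EulerSubst

theorem integral_rpow_mul_rpow_mul_rpow_neg_add {a b s t : ℝ} (ha : 0 < a) (hb : 0 < b)
    (hs : 0 < s) (hst : s < t) :
    ∫ u in (0:ℝ)..s, u ^ (a - 1) * (s - u) ^ (b - 1) * (t - u) ^ (-(a + b)) =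
      betaR a b * (s ^ (a + b - 1) * t ^ (-b) * (t - s) ^ (-a)) := by
  rw [integral_of_le hs.le, ← integral_Icc_eq_integral_Ioc, ← eulerSubst_image_Icc hs hst,
    integral_image_eq_integral_abs_deriv_smul measurableSet_Icc
      (fun w hw => (hasDerivAt_eulerSubst hs hst hw.1).hasDerivWithinAt)
      ((eulerSubst_injOn hs hst).mono Icc_subset_Ici_self)]
  simp only [smul_eq_mul]
  rw [setIntegral_congr_fun measurableSet_Icc fun w hw => eulerSubst_jacobian hs hst a b hw,
    MeasureTheory.integral_const_mul, betaR_eq_integral ha hb, integral_of_le zero_le_one,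
    integral_Icc_eq_integral_Ioc, mul_comm]

theorem cH_sq_mul_betaR {H : ℝ} (hH : 1 / 2 < H) (hH1 : H < 1) :
    cH H ^ 2 * betaR (2 - 2 * H) (H - 1 / 2) = H * (2 * H - 1) := by
  have hB : 0 < betaR (2 - 2 * H) (H - 1 / 2) :=
    ProbabilityTheory.beta_pos (by linarith) (by linarith)
  rw [cH, Real.sq_sqrt (div_nonneg (by nlinarith) hB.le), div_mul_cancel₀ _ hB.ne']

theorem hasDerivAt_KH {H s t : ℝ} (hH : 1 / 2 < H) (hs : 0 < s) (hst : s < t) :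
    HasDerivAt (fun τ => KH H τ s) (dKH H t s) t := by
  have ht : 0 < t := hs.trans hst
  set f : ℝ → ℝ := fun u => (u - s) ^ (H - 3 / 2) * u ^ (H - 1 / 2) with hf
  have hcont : ContinuousOn f (Ioi s) := by
    refine ContinuousOn.mul ?_ ?_ <;> refine ContinuousOn.rpow_const (by fun_prop) fun u hu => ?_
    · exact Or.inl (sub_pos.2 hu).ne'
    · exact Or.inl (hs.trans hu).ne'
  have hint : IntervalIntegrable f volume s t := by
    have hsing : IntervalIntegrable (fun u : ℝ => (u - s) ^ (H - 3 / 2)) volume s t := by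
      simpa using (intervalIntegrable_rpow' (by linarith) (a := 0) (b := t - s)).comp_sub_right s
    refine hsing.mul_continuousOn (ContinuousOn.rpow_const (by fun_prop) fun u hu => ?_)
    rw [uIcc_of_le hst.le] at hu
    exact Or.inl (hs.trans_le hu.1).ne'
  have hFTC := integral_hasDerivAt_right hint
    (hcont.stronglyMeasurableAtFilter isOpen_Ioi t hst)
    (hcont.continuousAt (isOpen_Ioi.mem_nhds hst))
  have hval : dKH H t s = cH H * s ^ ((1:ℝ) / 2 - H) * f t := by
    simp only [dKH, hf]
    rw [Real.div_rpow hs.le ht.le, show H - 1 / 2 = -((1:ℝ) / 2 - H) by ring,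
      Real.rpow_neg ht.le]
    ring
  rw [hval]
  exact hFTC.const_mul _

theorem dKH_mul_dKH {H s t u : ℝ} (hs : 0 < s) (ht : 0 < t) (hu : 0 < u) :
    dKH H s u * dKH H t u = cH H ^ 2 * (s * t) ^ (H - 1 / 2) *
      (u ^ (1 - 2 * H) * (s - u) ^ (H - 3 / 2) * (t - u) ^ (H - 3 / 2)) := by
  have hpow : (u / s) ^ ((1:ℝ) / 2 - H) * (u / t) ^ ((1:ℝ) / 2 - H) =
      (s * t) ^ (H - 1 / 2) * u ^ (1 - 2 * H) := by
    rw [Real.div_rpow hu.le hs.le, Real.div_rpow hu.le ht.le, div_mul_div_comm,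
      ← Real.rpow_add hu, ← Real.mul_rpow hs.le ht.le,
      show (1:ℝ) / 2 - H + ((1:ℝ) / 2 - H) = 1 - 2 * H by ring,
      show H - 1 / 2 = -((1:ℝ) / 2 - H) by ring, Real.rpow_neg (by positivity)]
    ring
  rw [dKH, dKH]
  linear_combination cH H ^ 2 * (s - u) ^ (H - 3 / 2) * (t - u) ^ (H - 3 / 2) * hpow

theorem integral_dKH_mul_dKH {H s t : ℝ} (hH : 1 / 2 < H) (hH1 : H < 1) (hs : 0 < s)
    (hst : s < t) :
    ∫ u in (0:ℝ)..s, dKH H s u * dKH H t u = H * (2 * H - 1) * (t - s) ^ (2 * H - 2) := by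
  have ht : 0 < t := hs.trans hst
  have euler := integral_rpow_mul_rpow_mul_rpow_neg_add (a := 2 - 2 * H) (b := H - 1 / 2)
    (by linarith) (by linarith) hs hst
  rw [show 2 - 2 * H - 1 = 1 - 2 * H by ring, show H - 1 / 2 - 1 = H - 3 / 2 by ring,
    show -(2 - 2 * H + (H - 1 / 2)) = H - 3 / 2 by ring,
    show 2 - 2 * H + (H - 1 / 2) - 1 = (1:ℝ) / 2 - H by ring,
    show -(H - 1 / 2) = (1:ℝ) / 2 - H by ring, show -(2 - 2 * H) = 2 * H - 2 by ring] at euler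
  have hst_pow : (s * t) ^ (H - 1 / 2) * (s ^ ((1:ℝ) / 2 - H) * t ^ ((1:ℝ) / 2 - H)) = 1 := by
    rw [← Real.mul_rpow hs.le ht.le, ← Real.rpow_add (by positivity),
      show H - 1 / 2 + ((1:ℝ) / 2 - H) = 0 by ring, Real.rpow_zero]
  calc ∫ u in (0:ℝ)..s, dKH H s u * dKH H t u
      = ∫ u in (0:ℝ)..s, cH H ^ 2 * (s * t) ^ (H - 1 / 2) *
          (u ^ (1 - 2 * H) * (s - u) ^ (H - 3 / 2) * (t - u) ^ (H - 3 / 2)) :=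
        intervalIntegral.integral_congr_ae (Filter.Eventually.of_forall fun u hu =>
          dKH_mul_dKH hs ht (by simpa [hs.le] using hu.1))
    _ = cH H ^ 2 * betaR (2 - 2 * H) (H - 1 / 2) *
          ((s * t) ^ (H - 1 / 2) * (s ^ ((1:ℝ) / 2 - H) * t ^ ((1:ℝ) / 2 - H))) *
          (t - s) ^ (2 * H - 2) := by
        rw [intervalIntegral.integral_const_mul, euler]
        ring
    _ = H * (2 * H - 1) * (t - s) ^ (2 * H - 2) := by
        rw [cH_sq_mul_betaR hH hH1, hst_pow, mul_one]

/-- For `H > 1/2`, `∂K^H/∂t(t,s) = c_H (s/t)^{1/2-H}(t-s)^{H-3/2}`, and for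
`a, b > 0`, `a ≠ b`: `∫_0^{a∧b} ∂₁K^H(a,u) ∂₁K^H(b,u) du = H(2H-1)|a-b|^{2H-2}`. -/
theorem stmt_8 (H : ℝ) (hH : 1 / 2 < H) (hH1 : H < 1) :
    (∀ s t : ℝ, 0 < s → s < t → HasDerivAt (fun τ => KH H τ s) (dKH H t s) t) ∧
    (∀ a b : ℝ, 0 < a → 0 < b → a ≠ b →
      ∫ u in (0:ℝ)..(min a b), dKH H a u * dKH H b u =
        H * (2 * H - 1) * |a - b| ^ (2 * H - 2)) := by
  refine ⟨fun s t hs hst => hasDerivAt_KH hH hs hst, fun a b ha hb hab => ?_⟩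
  rcases hab.lt_or_gt with h | h
  · rw [min_eq_left h.le, abs_sub_comm, abs_of_pos (sub_pos.2 h)]
    exact integral_dKH_mul_dKH hH hH1 ha h
  · rw [min_eq_right h.le, abs_of_pos (sub_pos.2 h)]
    simp_rw [mul_comm (dKH H a _)]
    exact integral_dKH_mul_dKH hH hH1 hb h
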